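/- (Lemma 2, direct part.) For every coupling of the eight variables, the quantity Δ satisfies: Δ ≥ −1 + ½·s₁(⟨A₁₁B₁₁⟩,⟨A₁₂B₁₂⟩,⟨A₂₁B₂₁⟩,⟨A₂₂B₂₂⟩); Δ ≥ ½(|⟨A₁₁⟩−⟨A₁₂⟩| + |⟨A₂₁⟩−⟨A₂₂⟩| + |⟨B₁₁⟩−⟨B₂₁⟩| + |⟨B₁₂⟩−⟨B₂₂⟩|); Δ ≤ 4 − [−1 + ½·s₁(⟨A₁₁B₁₁⟩,⟨A₁₂B₁₂⟩,⟨A₂₁B₂₁⟩,⟨A₂₂B₂₂⟩)]; and Δ ≤ 4 − ½(|⟨A₁₁⟩+⟨A₁₂⟩| + |⟨A₂₁⟩+⟨A₂₂⟩| + |⟨B₁₁⟩+⟨B₂₁⟩| + |⟨B₁₂⟩+⟨B₂₂⟩|). -/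
import Mathlib


open Finset

noncomputable section

/-- The ±1 value encoded by a Boolean: `true ↦ 1`, `false ↦ -1`. -/
def pm1 (b : Bool) : ℝ := if b then 1 else -1

/-- A joint probability distribution of two ±1-valued random variables,
encoded as a distribution on `Bool × Bool` (with `pm1` giving the ±1 values). -/
structure PairDist where
  p : Bool → Bool → ℝ
  nonneg : ∀ a b, 0 ≤ p a b
  total : (∑ a, ∑ b, p a b) = 1

/-- The expectation of the first variable. -/
def PairDist.expA (d : PairDist) : ℝ := ∑ a, ∑ b, pm1 a * d.p a b

/-- The expectation of the second variable. -/
def PairDist.expB (d : PairDist) : ℝ := ∑ a, ∑ b, pm1 b * d.p a b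

/-- The expectation of the product of the two variables. -/
def PairDist.expAB (d : PairDist) : ℝ := ∑ a, ∑ b, (pm1 a * pm1 b) * d.p a b

/-- A configuration of the eight variables A_ij, B_ij (i,j ∈ {1,2} ↦ Fin 2):
`(f i j).1` is the value of `A_ij` and `(f i j).2` the value of `B_ij`. -/
abbrev Cfg8 := Fin 2 → Fin 2 → Bool × Bool

/-- `μ` is a coupling of the eight variables: a probability distribution on {−1,1}⁸
whose marginal on each pair (A_ij, B_ij) is the given distribution `d i j`. -/
def IsCoupling (d : Fin 2 → Fin 2 → PairDist) (μ : Cfg8 → ℝ) : Prop :=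
  (∀ f, 0 ≤ μ f) ∧ (∑ f, μ f) = 1 ∧
    ∀ i j : Fin 2, ∀ a b : Bool,
      (∑ f, if f i j = (a, b) then μ f else 0) = (d i j).p a b

/-- Pr[A_i1 ≠ A_i2] in a distribution `μ` on the eight variables. -/
def prNeA (μ : Cfg8 → ℝ) (i : Fin 2) : ℝ :=
  ∑ f, if (f i 0).1 ≠ (f i 1).1 then μ f else 0

/-- Pr[B_1j ≠ B_2j] in a distribution `μ` on the eight variables. -/
def prNeB (μ : Cfg8 → ℝ) (j : Fin 2) : ℝ :=
  ∑ f, if (f 0 j).2 ≠ (f 1 j).2 then μ f else 0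

/-- Δ = Pr[A₁₁≠A₁₂] + Pr[A₂₁≠A₂₂] + Pr[B₁₁≠B₂₁] + Pr[B₁₂≠B₂₂]. -/
def Δ (μ : Cfg8 → ℝ) : ℝ := prNeA μ 0 + prNeA μ 1 + prNeB μ 0 + prNeB μ 1

/-- Δ₀: the natural measure of violation of marginal selectivity. -/
def Δ0 (d : Fin 2 → Fin 2 → PairDist) : ℝ :=
  (|(d 0 0).expA - (d 0 1).expA| + |(d 1 0).expA - (d 1 1).expA| +
   |(d 0 0).expB - (d 1 0).expB| + |(d 0 1).expB - (d 1 1).expB|) / 2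

/-- max_{i,j} |⟨A₁₁B₁₁⟩ + ⟨A₁₂B₁₂⟩ + ⟨A₂₁B₂₁⟩ + ⟨A₂₂B₂₂⟩ − 2⟨A_ijB_ij⟩|. -/
def chshMax (d : Fin 2 → Fin 2 → PairDist) : ℝ :=
  max (max |(d 0 0).expAB + (d 0 1).expAB + (d 1 0).expAB + (d 1 1).expAB - 2 * (d 0 0).expAB|
           |(d 0 0).expAB + (d 0 1).expAB + (d 1 0).expAB + (d 1 1).expAB - 2 * (d 0 1).expAB|)
      (max |(d 0 0).expAB + (d 0 1).expAB + (d 1 0).expAB + (d 1 1).expAB - 2 * (d 1 0).expAB|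
           |(d 0 0).expAB + (d 0 1).expAB + (d 1 0).expAB + (d 1 1).expAB - 2 * (d 1 1).expAB|)

/-- Δ_CHSH = ½·max_{i,j}|…| − 1. -/
def ΔCHSH (d : Fin 2 → Fin 2 → PairDist) : ℝ := chshMax d / 2 - 1
/-- s₀(a,b,c,d): max of ±a±b±c±d over sign patterns with an even number of minuses. -/
def s0 (a b c d : ℝ) : ℝ :=
  max (max (max (a + b + c + d) (a + b - c - d)) (max (a - b + c - d) (a - b - c + d)))
      (max (max (-a - b + c + d) (-a + b - c + d)) (max (-a + b + c - d) (-a - b - c - d)))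

/-- s₁(a,b,c,d): max of ±a±b±c±d over sign patterns with an odd number of minuses. -/
def s1 (a b c d : ℝ) : ℝ :=
  max (max (max (-a + b + c + d) (a - b + c + d)) (max (a + b - c + d) (a + b + c - d)))
      (max (max (a - b - c - d) (-a + b - c - d)) (max (-a - b + c - d) (-a - b - c + d)))
lemma pm1_true : pm1 true = 1 := rfl
lemma pm1_false : pm1 false = -1 := rfl
lemma pm1_not (b : Bool) : pm1 (!b) = -pm1 b := by cases b <;> simp [pm1]

lemma sum_pair_eq (g : Bool × Bool → ℝ) (x : Bool × Bool) :
    (∑ a, ∑ b, if x = (a, b) then g (a, b) else 0) = g x := by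
  obtain ⟨c, e⟩ := x
  cases c <;> cases e <;> simp [Fintype.sum_bool]

lemma marg_sum {d : Fin 2 → Fin 2 → PairDist} {μ : Cfg8 → ℝ} (hμ : IsCoupling d μ)
    (i j : Fin 2) (g : Bool × Bool → ℝ) :
    (∑ a, ∑ b, g (a, b) * (d i j).p a b) = ∑ f, g (f i j) * μ f := by
  have hm := hμ.2.2
  have h1 : ∀ a b : Bool, g (a, b) * (d i j).p a b
      = ∑ f, (if f i j = (a, b) then g (a, b) * μ f else 0) := by
    intro a b
    rw [← hm i j a b, Finset.mul_sum]
    exact Finset.sum_congr rfl fun f _ => by split <;> simp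
  simp only [h1]
  calc (∑ a, ∑ b, ∑ f, (if f i j = (a, b) then g (a, b) * μ f else 0))
      = ∑ a, ∑ f, ∑ b, (if f i j = (a, b) then g (a, b) * μ f else 0) :=
        Finset.sum_congr rfl fun a _ => Finset.sum_comm
    _ = ∑ f, ∑ a, ∑ b, (if f i j = (a, b) then g (a, b) * μ f else 0) := Finset.sum_comm
    _ = ∑ f, g (f i j) * μ f := Finset.sum_congr rfl fun f _ => by
        simpa using sum_pair_eq (fun x => g x * μ f) (f i j)

lemma expAB_sum {d : Fin 2 → Fin 2 → PairDist} {μ : Cfg8 → ℝ} (hμ : IsCoupling d μ)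
    (i j : Fin 2) : (d i j).expAB = ∑ f, (pm1 (f i j).1 * pm1 (f i j).2) * μ f :=
  marg_sum hμ i j fun x => pm1 x.1 * pm1 x.2

lemma expA_sum {d : Fin 2 → Fin 2 → PairDist} {μ : Cfg8 → ℝ} (hμ : IsCoupling d μ)
    (i j : Fin 2) : (d i j).expA = ∑ f, pm1 (f i j).1 * μ f :=
  marg_sum hμ i j fun x => pm1 x.1

lemma expB_sum {d : Fin 2 → Fin 2 → PairDist} {μ : Cfg8 → ℝ} (hμ : IsCoupling d μ)
    (i j : Fin 2) : (d i j).expB = ∑ f, pm1 (f i j).2 * μ f :=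
  marg_sum hμ i j fun x => pm1 x.2

lemma prNeA_sum (μ : Cfg8 → ℝ) (i : Fin 2) :
    prNeA μ i = ∑ f, (1 - pm1 (f i 0).1 * pm1 (f i 1).1) / 2 * μ f := by
  unfold prNeA
  refine Finset.sum_congr rfl fun f _ => ?_
  cases h0 : (f i 0).1 <;> cases h1 : (f i 1).1 <;>
    simp [h0, h1, pm1_true, pm1_false] <;> norm_num

lemma prNeB_sum (μ : Cfg8 → ℝ) (j : Fin 2) :
    prNeB μ j = ∑ f, (1 - pm1 (f 0 j).2 * pm1 (f 1 j).2) / 2 * μ f := by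
  unfold prNeB
  refine Finset.sum_congr rfl fun f _ => ?_
  cases h0 : (f 0 j).2 <;> cases h1 : (f 1 j).2 <;>
    simp [h0, h1, pm1_true, pm1_false] <;> norm_num

lemma delta_sum {d : Fin 2 → Fin 2 → PairDist} {μ : Cfg8 → ℝ} (hμ : IsCoupling d μ) :
    Δ μ = ∑ f, ((1 - pm1 (f 0 0).1 * pm1 (f 0 1).1)/2 + (1 - pm1 (f 1 0).1 * pm1 (f 1 1).1)/2 +
      (1 - pm1 (f 0 0).2 * pm1 (f 1 0).2)/2 + (1 - pm1 (f 0 1).2 * pm1 (f 1 1).2)/2) * μ f := by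
  unfold Δ
  rw [prNeA_sum μ 0, prNeA_sum μ 1, prNeB_sum μ 0, prNeB_sum μ 1,
    ← Finset.sum_add_distrib, ← Finset.sum_add_distrib, ← Finset.sum_add_distrib]
  exact Finset.sum_congr rfl fun f _ => by ring

lemma key_lemma {d : Fin 2 → Fin 2 → PairDist} {μ : Cfg8 → ℝ} (hμ : IsCoupling d μ)
    (t u e0 e1 e2 e3 : ℝ)
    (hpt : ∀ a0 a1 a2 a3 b0 b1 b2 b3 : Bool,
      e0 * (pm1 a0 * pm1 b0) + e1 * (pm1 a1 * pm1 b1) + e2 * (pm1 a2 * pm1 b2) + e3 * (pm1 a3 * pm1 b3) ≤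
      t + u * ((1 - pm1 a0 * pm1 a1)/2 + (1 - pm1 a2 * pm1 a3)/2 + (1 - pm1 b0 * pm1 b2)/2 + (1 - pm1 b1 * pm1 b3)/2)) :
    e0 * (d 0 0).expAB + e1 * (d 0 1).expAB + e2 * (d 1 0).expAB + e3 * (d 1 1).expAB
      ≤ t + u * Δ μ := by
  have hpos := hμ.1
  have htot := hμ.2.1
  rw [expAB_sum hμ 0 0, expAB_sum hμ 0 1, expAB_sum hμ 1 0, expAB_sum hμ 1 1, delta_sum hμ]
  have hL : e0 * (∑ f, (pm1 (f 0 0).1 * pm1 (f 0 0).2) * μ f) +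
      e1 * (∑ f, (pm1 (f 0 1).1 * pm1 (f 0 1).2) * μ f) +
      e2 * (∑ f, (pm1 (f 1 0).1 * pm1 (f 1 0).2) * μ f) +
      e3 * (∑ f, (pm1 (f 1 1).1 * pm1 (f 1 1).2) * μ f)
      = ∑ f, (e0 * (pm1 (f 0 0).1 * pm1 (f 0 0).2) + e1 * (pm1 (f 0 1).1 * pm1 (f 0 1).2) +
          e2 * (pm1 (f 1 0).1 * pm1 (f 1 0).2) + e3 * (pm1 (f 1 1).1 * pm1 (f 1 1).2)) * μ f := by
    rw [Finset.mul_sum, Finset.mul_sum, Finset.mul_sum, Finset.mul_sum,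
      ← Finset.sum_add_distrib, ← Finset.sum_add_distrib, ← Finset.sum_add_distrib]
    exact Finset.sum_congr rfl fun f _ => by ring
  have hR : t + u * (∑ f, ((1 - pm1 (f 0 0).1 * pm1 (f 0 1).1)/2 + (1 - pm1 (f 1 0).1 * pm1 (f 1 1).1)/2 +
      (1 - pm1 (f 0 0).2 * pm1 (f 1 0).2)/2 + (1 - pm1 (f 0 1).2 * pm1 (f 1 1).2)/2) * μ f)
      = ∑ f, (t + u * ((1 - pm1 (f 0 0).1 * pm1 (f 0 1).1)/2 + (1 - pm1 (f 1 0).1 * pm1 (f 1 1).1)/2 +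
          (1 - pm1 (f 0 0).2 * pm1 (f 1 0).2)/2 + (1 - pm1 (f 0 1).2 * pm1 (f 1 1).2)/2)) * μ f := by
    rw [Finset.mul_sum]
    calc t + ∑ f, u * (((1 - pm1 (f 0 0).1 * pm1 (f 0 1).1)/2 + (1 - pm1 (f 1 0).1 * pm1 (f 1 1).1)/2 +
          (1 - pm1 (f 0 0).2 * pm1 (f 1 0).2)/2 + (1 - pm1 (f 0 1).2 * pm1 (f 1 1).2)/2) * μ f)
        = (∑ f, t * μ f) + ∑ f, u * (((1 - pm1 (f 0 0).1 * pm1 (f 0 1).1)/2 + (1 - pm1 (f 1 0).1 * pm1 (f 1 1).1)/2 +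
          (1 - pm1 (f 0 0).2 * pm1 (f 1 0).2)/2 + (1 - pm1 (f 0 1).2 * pm1 (f 1 1).2)/2) * μ f) := by
          have h3 : (∑ f : Cfg8, t * μ f) = t := by rw [← Finset.mul_sum, htot, mul_one]
          rw [h3]
      _ = _ := by
          rw [← Finset.sum_add_distrib]
          exact Finset.sum_congr rfl fun f _ => by ring
  rw [hL, hR]
  exact Finset.sum_le_sum fun f _ =>
    mul_le_mul_of_nonneg_right
      (hpt (f 0 0).1 (f 0 1).1 (f 1 0).1 (f 1 1).1 (f 0 0).2 (f 0 1).2 (f 1 0).2 (f 1 1).2)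
      (hpos f)

lemma abs_pm1_sub_mul (x y : Bool) (m : ℝ) (hm : 0 ≤ m) :
    |pm1 x * m - pm1 y * m| ≤ 2 * (if x ≠ y then m else 0) := by
  rw [← sub_mul, abs_mul, abs_of_nonneg hm]
  cases x <;> cases y <;> simp [pm1_true, pm1_false] <;> norm_num

lemma abs_pm1_add_mul (x y : Bool) (m : ℝ) (hm : 0 ≤ m) :
    |pm1 x * m + pm1 y * m| ≤ 2 * m - 2 * (if x ≠ y then m else 0) := by
  rw [← add_mul, abs_mul, abs_of_nonneg hm]
  cases x <;> cases y <;> simp [pm1_true, pm1_false] <;> norm_num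

set_option maxHeartbeats 1000000 in
lemma pwL1 (a0 a1 a2 a3 b0 b1 b2 b3 : Bool) :
    ((-1) * (pm1 a0 * pm1 b0) + 1 * (pm1 a1 * pm1 b1) + 1 * (pm1 a2 * pm1 b2) + 1 * (pm1 a3 * pm1 b3) : ℝ)
    ≤ 2 + 2 * ((1 - pm1 a0 * pm1 a1)/2 + (1 - pm1 a2 * pm1 a3)/2 + (1 - pm1 b0 * pm1 b2)/2 + (1 - pm1 b1 * pm1 b3)/2) := by
  cases a0 <;> cases a1 <;> cases a2 <;> cases a3 <;> cases b0 <;> cases b1 <;> cases b2 <;> cases b3 <;>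
    simp only [pm1_true, pm1_false] <;> norm_num

set_option maxHeartbeats 1000000 in
lemma pwL2 (a0 a1 a2 a3 b0 b1 b2 b3 : Bool) :
    (1 * (pm1 a0 * pm1 b0) + (-1) * (pm1 a1 * pm1 b1) + 1 * (pm1 a2 * pm1 b2) + 1 * (pm1 a3 * pm1 b3) : ℝ)
    ≤ 2 + 2 * ((1 - pm1 a0 * pm1 a1)/2 + (1 - pm1 a2 * pm1 a3)/2 + (1 - pm1 b0 * pm1 b2)/2 + (1 - pm1 b1 * pm1 b3)/2) := by
  cases a0 <;> cases a1 <;> cases a2 <;> cases a3 <;> cases b0 <;> cases b1 <;> cases b2 <;> cases b3 <;>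
    simp only [pm1_true, pm1_false] <;> norm_num

set_option maxHeartbeats 1000000 in
lemma pwL3 (a0 a1 a2 a3 b0 b1 b2 b3 : Bool) :
    (1 * (pm1 a0 * pm1 b0) + 1 * (pm1 a1 * pm1 b1) + (-1) * (pm1 a2 * pm1 b2) + 1 * (pm1 a3 * pm1 b3) : ℝ)
    ≤ 2 + 2 * ((1 - pm1 a0 * pm1 a1)/2 + (1 - pm1 a2 * pm1 a3)/2 + (1 - pm1 b0 * pm1 b2)/2 + (1 - pm1 b1 * pm1 b3)/2) := by
  cases a0 <;> cases a1 <;> cases a2 <;> cases a3 <;> cases b0 <;> cases b1 <;> cases b2 <;> cases b3 <;>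
    simp only [pm1_true, pm1_false] <;> norm_num

set_option maxHeartbeats 1000000 in
lemma pwL4 (a0 a1 a2 a3 b0 b1 b2 b3 : Bool) :
    (1 * (pm1 a0 * pm1 b0) + 1 * (pm1 a1 * pm1 b1) + 1 * (pm1 a2 * pm1 b2) + (-1) * (pm1 a3 * pm1 b3) : ℝ)
    ≤ 2 + 2 * ((1 - pm1 a0 * pm1 a1)/2 + (1 - pm1 a2 * pm1 a3)/2 + (1 - pm1 b0 * pm1 b2)/2 + (1 - pm1 b1 * pm1 b3)/2) := by
  cases a0 <;> cases a1 <;> cases a2 <;> cases a3 <;> cases b0 <;> cases b1 <;> cases b2 <;> cases b3 <;>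
    simp only [pm1_true, pm1_false] <;> norm_num

set_option maxHeartbeats 1000000 in
lemma pwL5 (a0 a1 a2 a3 b0 b1 b2 b3 : Bool) :
    (1 * (pm1 a0 * pm1 b0) + (-1) * (pm1 a1 * pm1 b1) + (-1) * (pm1 a2 * pm1 b2) + (-1) * (pm1 a3 * pm1 b3) : ℝ)
    ≤ 2 + 2 * ((1 - pm1 a0 * pm1 a1)/2 + (1 - pm1 a2 * pm1 a3)/2 + (1 - pm1 b0 * pm1 b2)/2 + (1 - pm1 b1 * pm1 b3)/2) := by
  cases a0 <;> cases a1 <;> cases a2 <;> cases a3 <;> cases b0 <;> cases b1 <;> cases b2 <;> cases b3 <;>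
    simp only [pm1_true, pm1_false] <;> norm_num

set_option maxHeartbeats 1000000 in
lemma pwL6 (a0 a1 a2 a3 b0 b1 b2 b3 : Bool) :
    ((-1) * (pm1 a0 * pm1 b0) + 1 * (pm1 a1 * pm1 b1) + (-1) * (pm1 a2 * pm1 b2) + (-1) * (pm1 a3 * pm1 b3) : ℝ)
    ≤ 2 + 2 * ((1 - pm1 a0 * pm1 a1)/2 + (1 - pm1 a2 * pm1 a3)/2 + (1 - pm1 b0 * pm1 b2)/2 + (1 - pm1 b1 * pm1 b3)/2) := by
  cases a0 <;> cases a1 <;> cases a2 <;> cases a3 <;> cases b0 <;> cases b1 <;> cases b2 <;> cases b3 <;>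
    simp only [pm1_true, pm1_false] <;> norm_num

set_option maxHeartbeats 1000000 in
lemma pwL7 (a0 a1 a2 a3 b0 b1 b2 b3 : Bool) :
    ((-1) * (pm1 a0 * pm1 b0) + (-1) * (pm1 a1 * pm1 b1) + 1 * (pm1 a2 * pm1 b2) + (-1) * (pm1 a3 * pm1 b3) : ℝ)
    ≤ 2 + 2 * ((1 - pm1 a0 * pm1 a1)/2 + (1 - pm1 a2 * pm1 a3)/2 + (1 - pm1 b0 * pm1 b2)/2 + (1 - pm1 b1 * pm1 b3)/2) := by
  cases a0 <;> cases a1 <;> cases a2 <;> cases a3 <;> cases b0 <;> cases b1 <;> cases b2 <;> cases b3 <;>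
    simp only [pm1_true, pm1_false] <;> norm_num

set_option maxHeartbeats 1000000 in
lemma pwL8 (a0 a1 a2 a3 b0 b1 b2 b3 : Bool) :
    ((-1) * (pm1 a0 * pm1 b0) + (-1) * (pm1 a1 * pm1 b1) + (-1) * (pm1 a2 * pm1 b2) + 1 * (pm1 a3 * pm1 b3) : ℝ)
    ≤ 2 + 2 * ((1 - pm1 a0 * pm1 a1)/2 + (1 - pm1 a2 * pm1 a3)/2 + (1 - pm1 b0 * pm1 b2)/2 + (1 - pm1 b1 * pm1 b3)/2) := by
  cases a0 <;> cases a1 <;> cases a2 <;> cases a3 <;> cases b0 <;> cases b1 <;> cases b2 <;> cases b3 <;>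
    simp only [pm1_true, pm1_false] <;> norm_num

lemma pwU1 (a0 a1 a2 a3 b0 b1 b2 b3 : Bool) :
    ((-1) * (pm1 a0 * pm1 b0) + 1 * (pm1 a1 * pm1 b1) + 1 * (pm1 a2 * pm1 b2) + 1 * (pm1 a3 * pm1 b3) : ℝ)
    ≤ 10 + (-2) * ((1 - pm1 a0 * pm1 a1)/2 + (1 - pm1 a2 * pm1 a3)/2 + (1 - pm1 b0 * pm1 b2)/2 + (1 - pm1 b1 * pm1 b3)/2) := by
  have h := pwL8 a0 (!a1) a2 (!a3) b0 b1 (!b2) (!b3)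
  simp only [pm1_not] at h
  ring_nf at h ⊢
  linarith

lemma pwU2 (a0 a1 a2 a3 b0 b1 b2 b3 : Bool) :
    (1 * (pm1 a0 * pm1 b0) + (-1) * (pm1 a1 * pm1 b1) + 1 * (pm1 a2 * pm1 b2) + 1 * (pm1 a3 * pm1 b3) : ℝ)
    ≤ 10 + (-2) * ((1 - pm1 a0 * pm1 a1)/2 + (1 - pm1 a2 * pm1 a3)/2 + (1 - pm1 b0 * pm1 b2)/2 + (1 - pm1 b1 * pm1 b3)/2) := by
  have h := pwL3 a0 (!a1) a2 (!a3) b0 b1 (!b2) (!b3)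
  simp only [pm1_not] at h
  ring_nf at h ⊢
  linarith

lemma pwU3 (a0 a1 a2 a3 b0 b1 b2 b3 : Bool) :
    (1 * (pm1 a0 * pm1 b0) + 1 * (pm1 a1 * pm1 b1) + (-1) * (pm1 a2 * pm1 b2) + 1 * (pm1 a3 * pm1 b3) : ℝ)
    ≤ 10 + (-2) * ((1 - pm1 a0 * pm1 a1)/2 + (1 - pm1 a2 * pm1 a3)/2 + (1 - pm1 b0 * pm1 b2)/2 + (1 - pm1 b1 * pm1 b3)/2) := by
  have h := pwL2 a0 (!a1) a2 (!a3) b0 b1 (!b2) (!b3)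
  simp only [pm1_not] at h
  ring_nf at h ⊢
  linarith

lemma pwU4 (a0 a1 a2 a3 b0 b1 b2 b3 : Bool) :
    (1 * (pm1 a0 * pm1 b0) + 1 * (pm1 a1 * pm1 b1) + 1 * (pm1 a2 * pm1 b2) + (-1) * (pm1 a3 * pm1 b3) : ℝ)
    ≤ 10 + (-2) * ((1 - pm1 a0 * pm1 a1)/2 + (1 - pm1 a2 * pm1 a3)/2 + (1 - pm1 b0 * pm1 b2)/2 + (1 - pm1 b1 * pm1 b3)/2) := by
  have h := pwL5 a0 (!a1) a2 (!a3) b0 b1 (!b2) (!b3)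
  simp only [pm1_not] at h
  ring_nf at h ⊢
  linarith

lemma pwU5 (a0 a1 a2 a3 b0 b1 b2 b3 : Bool) :
    (1 * (pm1 a0 * pm1 b0) + (-1) * (pm1 a1 * pm1 b1) + (-1) * (pm1 a2 * pm1 b2) + (-1) * (pm1 a3 * pm1 b3) : ℝ)
    ≤ 10 + (-2) * ((1 - pm1 a0 * pm1 a1)/2 + (1 - pm1 a2 * pm1 a3)/2 + (1 - pm1 b0 * pm1 b2)/2 + (1 - pm1 b1 * pm1 b3)/2) := by
  have h := pwL4 a0 (!a1) a2 (!a3) b0 b1 (!b2) (!b3)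
  simp only [pm1_not] at h
  ring_nf at h ⊢
  linarith

lemma pwU6 (a0 a1 a2 a3 b0 b1 b2 b3 : Bool) :
    ((-1) * (pm1 a0 * pm1 b0) + 1 * (pm1 a1 * pm1 b1) + (-1) * (pm1 a2 * pm1 b2) + (-1) * (pm1 a3 * pm1 b3) : ℝ)
    ≤ 10 + (-2) * ((1 - pm1 a0 * pm1 a1)/2 + (1 - pm1 a2 * pm1 a3)/2 + (1 - pm1 b0 * pm1 b2)/2 + (1 - pm1 b1 * pm1 b3)/2) := by
  have h := pwL7 a0 (!a1) a2 (!a3) b0 b1 (!b2) (!b3)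
  simp only [pm1_not] at h
  ring_nf at h ⊢
  linarith

lemma pwU7 (a0 a1 a2 a3 b0 b1 b2 b3 : Bool) :
    ((-1) * (pm1 a0 * pm1 b0) + (-1) * (pm1 a1 * pm1 b1) + 1 * (pm1 a2 * pm1 b2) + (-1) * (pm1 a3 * pm1 b3) : ℝ)
    ≤ 10 + (-2) * ((1 - pm1 a0 * pm1 a1)/2 + (1 - pm1 a2 * pm1 a3)/2 + (1 - pm1 b0 * pm1 b2)/2 + (1 - pm1 b1 * pm1 b3)/2) := by
  have h := pwL6 a0 (!a1) a2 (!a3) b0 b1 (!b2) (!b3)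
  simp only [pm1_not] at h
  ring_nf at h ⊢
  linarith

lemma pwU8 (a0 a1 a2 a3 b0 b1 b2 b3 : Bool) :
    ((-1) * (pm1 a0 * pm1 b0) + (-1) * (pm1 a1 * pm1 b1) + (-1) * (pm1 a2 * pm1 b2) + 1 * (pm1 a3 * pm1 b3) : ℝ)
    ≤ 10 + (-2) * ((1 - pm1 a0 * pm1 a1)/2 + (1 - pm1 a2 * pm1 a3)/2 + (1 - pm1 b0 * pm1 b2)/2 + (1 - pm1 b1 * pm1 b3)/2) := by
  have h := pwL1 a0 (!a1) a2 (!a3) b0 b1 (!b2) (!b3)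
  simp only [pm1_not] at h
  ring_nf at h ⊢
  linarith


/-- **Lemma 2, direct part.** Every coupling's Δ satisfies the four bounds. -/
theorem stmt9 (d : Fin 2 → Fin 2 → PairDist) (μ : Cfg8 → ℝ) (hμ : IsCoupling d μ) :
    -1 + s1 (d 0 0).expAB (d 0 1).expAB (d 1 0).expAB (d 1 1).expAB / 2 ≤ Δ μ ∧
    (|(d 0 0).expA - (d 0 1).expA| + |(d 1 0).expA - (d 1 1).expA| +
     |(d 0 0).expB - (d 1 0).expB| + |(d 0 1).expB - (d 1 1).expB|) / 2 ≤ Δ μ ∧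
    Δ μ ≤ 4 - (-1 + s1 (d 0 0).expAB (d 0 1).expAB (d 1 0).expAB (d 1 1).expAB / 2) ∧
    Δ μ ≤ 4 - (|(d 0 0).expA + (d 0 1).expA| + |(d 1 0).expA + (d 1 1).expA| +
               |(d 0 0).expB + (d 1 0).expB| + |(d 0 1).expB + (d 1 1).expB|) / 2 := by
  obtain ⟨hpos, htot, hm⟩ := hμ
  have hμ' : IsCoupling d μ := ⟨hpos, htot, hm⟩
  have k1 := key_lemma hμ' 2 2 (-1) 1 1 1 pwL1
  have k2 := key_lemma hμ' 2 2 1 (-1) 1 1 pwL2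
  have k3 := key_lemma hμ' 2 2 1 1 (-1) 1 pwL3
  have k4 := key_lemma hμ' 2 2 1 1 1 (-1) pwL4
  have k5 := key_lemma hμ' 2 2 1 (-1) (-1) (-1) pwL5
  have k6 := key_lemma hμ' 2 2 (-1) 1 (-1) (-1) pwL6
  have k7 := key_lemma hμ' 2 2 (-1) (-1) 1 (-1) pwL7
  have k8 := key_lemma hμ' 2 2 (-1) (-1) (-1) 1 pwL8
  have u1 := key_lemma hμ' 10 (-2) (-1) 1 1 1 pwU1
  have u2 := key_lemma hμ' 10 (-2) 1 (-1) 1 1 pwU2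
  have u3 := key_lemma hμ' 10 (-2) 1 1 (-1) 1 pwU3
  have u4 := key_lemma hμ' 10 (-2) 1 1 1 (-1) pwU4
  have u5 := key_lemma hμ' 10 (-2) 1 (-1) (-1) (-1) pwU5
  have u6 := key_lemma hμ' 10 (-2) (-1) 1 (-1) (-1) pwU6
  have u7 := key_lemma hμ' 10 (-2) (-1) (-1) 1 (-1) pwU7
  have u8 := key_lemma hμ' 10 (-2) (-1) (-1) (-1) 1 pwU8
  have h2A : ∀ i : Fin 2, |(d i 0).expA - (d i 1).expA| ≤ 2 * prNeA μ i := by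
    intro i
    rw [expA_sum hμ' i 0, expA_sum hμ' i 1, ← Finset.sum_sub_distrib]
    refine (Finset.abs_sum_le_sum_abs _ _).trans ?_
    unfold prNeA
    rw [Finset.mul_sum]
    exact Finset.sum_le_sum fun f _ => abs_pm1_sub_mul (f i 0).1 (f i 1).1 (μ f) (hpos f)
  have h2B : ∀ j : Fin 2, |(d 0 j).expB - (d 1 j).expB| ≤ 2 * prNeB μ j := by
    intro j
    rw [expB_sum hμ' 0 j, expB_sum hμ' 1 j, ← Finset.sum_sub_distrib]
    refine (Finset.abs_sum_le_sum_abs _ _).trans ?_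
    unfold prNeB
    rw [Finset.mul_sum]
    exact Finset.sum_le_sum fun f _ => abs_pm1_sub_mul (f 0 j).2 (f 1 j).2 (μ f) (hpos f)
  have h4A : ∀ i : Fin 2, |(d i 0).expA + (d i 1).expA| ≤ 2 - 2 * prNeA μ i := by
    intro i
    rw [expA_sum hμ' i 0, expA_sum hμ' i 1, ← Finset.sum_add_distrib]
    refine (Finset.abs_sum_le_sum_abs _ _).trans ?_
    have hrhs : 2 - 2 * prNeA μ i
        = ∑ f, (2 * μ f - 2 * (if (f i 0).1 ≠ (f i 1).1 then μ f else 0)) := by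
      unfold prNeA
      rw [Finset.sum_sub_distrib, ← Finset.mul_sum, ← Finset.mul_sum, htot, mul_one]
    rw [hrhs]
    exact Finset.sum_le_sum fun f _ => by
      have := abs_pm1_add_mul (f i 0).1 (f i 1).1 (μ f) (hpos f); linarith
  have h4B : ∀ j : Fin 2, |(d 0 j).expB + (d 1 j).expB| ≤ 2 - 2 * prNeB μ j := by
    intro j
    rw [expB_sum hμ' 0 j, expB_sum hμ' 1 j, ← Finset.sum_add_distrib]
    refine (Finset.abs_sum_le_sum_abs _ _).trans ?_
    have hrhs : 2 - 2 * prNeB μ j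
        = ∑ f, (2 * μ f - 2 * (if (f 0 j).2 ≠ (f 1 j).2 then μ f else 0)) := by
      unfold prNeB
      rw [Finset.sum_sub_distrib, ← Finset.mul_sum, ← Finset.mul_sum, htot, mul_one]
    rw [hrhs]
    exact Finset.sum_le_sum fun f _ => by
      have := abs_pm1_add_mul (f 0 j).2 (f 1 j).2 (μ f) (hpos f); linarith
  have hΔdef : Δ μ = prNeA μ 0 + prNeA μ 1 + prNeB μ 0 + prNeB μ 1 := rfl
  have hsL : s1 (d 0 0).expAB (d 0 1).expAB (d 1 0).expAB (d 1 1).expAB ≤ 2 + 2 * Δ μ := by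
    unfold s1
    simp only [max_le_iff]
    refine ⟨⟨⟨?_, ?_⟩, ?_, ?_⟩, ⟨?_, ?_⟩, ?_, ?_⟩ <;> linarith
  have hsU : s1 (d 0 0).expAB (d 0 1).expAB (d 1 0).expAB (d 1 1).expAB ≤ 10 - 2 * Δ μ := by
    unfold s1
    simp only [max_le_iff]
    refine ⟨⟨⟨?_, ?_⟩, ?_, ?_⟩, ⟨?_, ?_⟩, ?_, ?_⟩ <;> linarith
  refine ⟨by linarith, ?_, by linarith, ?_⟩
  · have := h2A 0; have := h2A 1; have := h2B 0; have := h2B 1; linarith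
  · have := h4A 0; have := h4A 1; have := h4B 0; have := h4B 1; linarith
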